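/- Let V be a finite-dimensional complex vector space with a nondegenerate symmetric bilinear form ω, and suppose dim V ≤ 4. If a linear map A : ℂᵏ → V is not ample with respect to ω and v ∈ V is nonzero, then there exists a linear functional f : ℂᵏ → ℂ such that the linear map x ↦ A(x) + f(x) • v is ample with respect to ω. -/

import Mathlib

/-- A linear map `A : E → W` is ample with respect to a bilinear form `β` on `W` if the
restriction of `β` to the range of `A` is either identically zero or nondegenerate. -/
def IsAmple {E W : Type*} [AddCommGroup E] [Module ℂ E] [AddCommGroup W] [Module ℂ W]
    (β : W →ₗ[ℂ] W →ₗ[ℂ] ℂ) (A : E →ₗ[ℂ] W) : Prop :=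
  (∀ w ∈ LinearMap.range A, ∀ w' ∈ LinearMap.range A, β w w' = 0) ∨
  (∀ w ∈ LinearMap.range A, w ≠ 0 → ∃ w' ∈ LinearMap.range A, β w w' ≠ 0)

/-!
Write `R = range A`. For every `y` with `ω v y ≠ 0`, a suitable `f` makes the range of
`x ↦ A x + f x • v` equal to the hyperplane `H = (R ⊔ ℂv) ∩ y^⊥` of `R ⊔ ℂv`. It suffices to find
such a `y` with `ω` nondegenerate on `H`.

A subspace containing an anisotropic vector has a radical of dimension less than `dim V / 2`,
so, as `dim V ≤ 4`, the radical of `R` is a line `ℂn`. If `ω n v = 0`, the radical of `R ⊔ ℂv` is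
still `ℂn` and any `y` with `ω n y ≠ 0` works. Otherwise `R ⊔ ℂv` is nondegenerate and any
anisotropic `y ∈ R ⊔ ℂv` works.
-/

open Module Submodule LinearMap

namespace LinearMap

theorem range_add_smulRight_eq {K V E : Type*} [Field K] [AddCommGroup V] [Module K V]
    [AddCommGroup E] [Module K E] (A : E →ₗ[K] V) {v : V} (g : V →ₗ[K] K) (hv : g v ≠ 0) :
    range (A + (-(g v)⁻¹ • g ∘ₗ A).smulRight v) = (range A ⊔ K ∙ v) ⊓ ker g := by
  apply le_antisymm
  · rintro _ ⟨x, rfl⟩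
    refine ⟨mem_sup.2 ⟨A x, ⟨x, rfl⟩, _, mem_span_singleton.2 ⟨_, rfl⟩, rfl⟩, ?_⟩
    simp [mul_right_comm _ _ (g v), hv]
  · rintro w ⟨hw, hgw⟩
    obtain ⟨_, ⟨x, rfl⟩, w, hw', rfl⟩ := mem_sup.1 hw
    obtain ⟨t, rfl⟩ := mem_span_singleton.1 hw'
    have : g (A x) = -t * g v := by
      simp only [SetLike.mem_coe, mem_ker, map_add, map_smul, smul_eq_mul] at hgw
      linear_combination hgw
    refine ⟨x, ?_⟩
    simp [this, mul_comm t (g v), hv]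

theorem exists_apply_ne_zero_and_apply_ne_zero {K M : Type*} [Semiring K] [AddCommMonoid M]
    [Module K M] {f g : M →ₗ[K] K} (hf : f ≠ 0) (hg : g ≠ 0) : ∃ x, f x ≠ 0 ∧ g x ≠ 0 := by
  obtain ⟨a, ha⟩ := DFunLike.ne_iff.1 hf
  obtain ⟨b, hb⟩ := DFunLike.ne_iff.1 hg
  by_cases hga : g a = 0
  · by_cases hfb : f b = 0
    · exact ⟨a + b, by simpa [hfb] using ha, by simpa [hga] using hb⟩
    · exact ⟨b, hfb, hb⟩
  · exact ⟨a, ha, hga⟩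

end LinearMap

namespace LinearMap.BilinForm

variable {K V : Type*} [Field K] [AddCommGroup V] [Module K V] {ω : LinearMap.BilinForm K V}

theorem exists_mem_apply_self_ne_zero [NeZero (2 : K)] (hω : ω.IsSymm) {S : Submodule K V}
    (h : ¬∀ w ∈ S, ∀ w' ∈ S, ω w w' = 0) : ∃ e ∈ S, ω e e ≠ 0 := by
  have := invertibleOfNonzero (two_ne_zero' K)
  push Not at h
  obtain ⟨w, hw, w', hw', hww'⟩ := h
  have hS : ω.restrict S ≠ 0 := fun h0 => hww' congr($h0 ⟨w, hw⟩ ⟨w', hw'⟩)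
  obtain ⟨x, hx⟩ := exists_bilinForm_self_ne_zero hS (isSymm_iff.1 (hω.restrict S))
  exact ⟨x, x.2, hx⟩

theorem two_mul_finrank_inf_orthogonal_lt [FiniteDimensional K V] (hω : ω.Nondegenerate)
    {S : Submodule K V} {e : V} (he : e ∈ S) (hee : ω e e ≠ 0) :
    2 * finrank K ↥(S ⊓ ω.orthogonal S) < finrank K V := by
  have h_orth : finrank K ↥(S ⊓ ω.orthogonal S) ≤ finrank K V - finrank K S :=
    finrank_orthogonal hω S ▸ finrank_mono inf_le_right
  have h_lt : finrank K ↥(S ⊓ ω.orthogonal S) < finrank K S :=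
    finrank_lt_finrank_of_lt <| lt_of_le_of_ne inf_le_left fun h =>
      hee ((h.ge he).2 e he)
  have := S.finrank_le
  omega

theorem inf_orthogonal_le_span_singleton [FiniteDimensional K V] (hω : ω.Nondegenerate)
    (hV : finrank K V ≤ 4) {S : Submodule K V} {e n : V} (he : e ∈ S) (hee : ω e e ≠ 0)
    (hn : n ∈ S ⊓ ω.orthogonal S) (hn0 : n ≠ 0) : S ⊓ ω.orthogonal S ≤ K ∙ n := by
  have := two_mul_finrank_inf_orthogonal_lt hω he hee
  refine (eq_of_le_of_finrank_le ((span_singleton_le_iff_mem _ _).2 hn) ?_).ge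
  rw [finrank_span_singleton hn0]
  omega

theorem sup_span_singleton_inf_orthogonal_eq_bot (hω : ω.IsSymm) {R : Submodule K V} {n v : V}
    (hn : n ∈ R ⊓ ω.orthogonal R) (hrad : R ⊓ ω.orthogonal R ≤ K ∙ n) (hnv : ω n v ≠ 0) :
    (R ⊔ K ∙ v) ⊓ ω.orthogonal (R ⊔ K ∙ v) = ⊥ := by
  rw [eq_bot_iff]
  rintro s ⟨hs, hs_orth⟩
  obtain ⟨r, hr, w, hw, rfl⟩ := mem_sup.1 hs
  obtain ⟨t, rfl⟩ := mem_span_singleton.1 hw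
  have ht : t = 0 := by
    have h := hs_orth n (mem_sup_left hn.1)
    rw [map_add, map_smul, hω.eq n r, hn.2 r hr, smul_eq_mul, zero_add] at h
    exact (mul_eq_zero.1 h).resolve_right hnv
  subst ht
  rw [zero_smul, add_zero] at hs_orth ⊢
  obtain ⟨a, rfl⟩ := mem_span_singleton.1 <|
    hrad ⟨hr, orthogonal_le le_sup_left hs_orth⟩
  have h := hs_orth v (mem_sup_right (mem_span_singleton_self v))
  rw [map_smul, hω.eq v n, smul_eq_mul] at h
  simp [(mul_eq_zero.1 h).resolve_right hnv]

theorem exists_mem_apply_ne_zero_and_apply_self_ne_zero [NeZero (2 : K)] (hω : ω.IsSymm)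
    {S : Submodule K V} (hS : S ⊓ ω.orthogonal S = ⊥) {v : V} (hv : v ∈ S) (hv0 : v ≠ 0) :
    ∃ y ∈ S, ω v y ≠ 0 ∧ ω y y ≠ 0 := by
  obtain ⟨a, ha, hva⟩ : ∃ a ∈ S, ω v a ≠ 0 := by
    by_contra! h
    exact hv0 <| (eq_bot_iff.1 hS) ⟨hv, fun a ha => hω.eq a v ▸ h a ha⟩
  by_cases hvv : ω v v = 0
  · by_cases haa : ω a a = 0
    · refine ⟨a + v, add_mem ha hv, by simpa [hvv] using hva, ?_⟩
      have : ω (a + v) (a + v) = 2 * ω v a := by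
        simp only [map_add, LinearMap.add_apply, haa, hvv, hω.eq a v]
        ring
      rw [this]
      exact mul_ne_zero two_ne_zero hva
    · exact ⟨a, ha, hva, haa⟩
  · exact ⟨v, hv, hvv, hvv⟩

/-- `S = H ⊕ K x` with `x ⊥ H`, so the radical of `H` lies in that of `S`. -/
theorem inf_ker_flip_inf_orthogonal_eq_bot (hω : ω.IsSymm) {S : Submodule K V} {x y : V}
    (hx : x ∈ S) (hxy : ω x y ≠ 0) (hxH : S ⊓ ker (ω.flip y) ≤ ker (ω.flip x))
    (hrad : S ⊓ ω.orthogonal S ≤ K ∙ x) :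
    S ⊓ ker (ω.flip y) ⊓ ω.orthogonal (S ⊓ ker (ω.flip y)) = ⊥ := by
  rw [eq_bot_iff]
  rintro h ⟨hH, h_orth⟩
  have h_orth_S : h ∈ ω.orthogonal S := by
    intro s hs
    set c := ω s y / ω x y
    have hsH : s - c • x ∈ S ⊓ ker (ω.flip y) :=
      ⟨sub_mem hs (S.smul_mem c hx), by simp [c, hxy]⟩
    have hxh : ω x h = 0 := (hω.eq x h).trans (hxH hH)
    calc ω s h = ω (s - c • x) h + c * ω x h := by simp
      _ = 0 := by rw [h_orth _ hsH, hxh, mul_zero, add_zero]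
  obtain ⟨t, rfl⟩ := mem_span_singleton.1 (hrad ⟨hH.1, h_orth_S⟩)
  have : t * ω x y = 0 := by simpa using hH.2
  simp [(mul_eq_zero.1 this).resolve_right hxy]

end LinearMap.BilinForm

theorem isAmple_iff {E W : Type*} [AddCommGroup E] [Module ℂ E] [AddCommGroup W] [Module ℂ W]
    {ω : LinearMap.BilinForm ℂ W} (hω : ω.IsSymm) {A : E →ₗ[ℂ] W} :
    IsAmple ω A ↔ (∀ w ∈ range A, ∀ w' ∈ range A, ω w w' = 0) ∨
      range A ⊓ ω.orthogonal (range A) = ⊥ := by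
  refine or_congr_right ⟨fun h => eq_bot_iff.2 fun w ⟨hw, hw_orth⟩ => ?_, fun h w hw hw0 => ?_⟩
  · by_contra hw0
    obtain ⟨w', hw', hww'⟩ := h w hw hw0
    exact hww' ((hω.eq w w').trans (hw_orth w' hw'))
  · by_contra! hw_rad
    exact hw0 (eq_bot_iff.1 h ⟨hw, fun w' hw' => (hω.eq w' w).trans (hw_rad w' hw')⟩)

/-- Proposition 4(B): let `V` carry a nondegenerate symmetric bilinear form `ω` and suppose
`dim V ≤ 4`. If `A : ℂᵏ → V` is not ample and `v ∈ V` is nonzero, then `x ↦ A x + f x • v`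
is ample for some linear functional `f : ℂᵏ → ℂ`. -/
theorem not_ample_perturb_vector {V : Type*} [AddCommGroup V] [Module ℂ V]
    [FiniteDimensional ℂ V]
    (ω : V →ₗ[ℂ] V →ₗ[ℂ] ℂ)
    (hsymm : ∀ x y : V, ω x y = ω y x)
    (hnd : ∀ x : V, (∀ y : V, ω x y = 0) → x = 0)
    (hdim : Module.finrank ℂ V ≤ 4)
    (k : ℕ) (A : (Fin k → ℂ) →ₗ[ℂ] V) (hA : ¬ IsAmple ω A)
    (v : V) (hv : v ≠ 0) :
    ∃ f : (Fin k → ℂ) →ₗ[ℂ] ℂ, IsAmple ω (A + f.smulRight v) := by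
  have hω : BilinForm.IsSymm ω := ⟨hsymm⟩
  have hω_nd : BilinForm.Nondegenerate ω :=
    ⟨hnd, fun x hx => hnd x fun y => (hsymm x y).trans (hx y)⟩
  set R := range A
  rw [isAmple_iff hω, not_or] at hA
  obtain ⟨e, heR, hee⟩ := BilinForm.exists_mem_apply_self_ne_zero hω hA.1
  obtain ⟨n, hn, hn0⟩ := (Submodule.ne_bot_iff _).1 hA.2
  suffices ∃ y, ω v y ≠ 0 ∧
      (R ⊔ ℂ ∙ v) ⊓ ker (ω.flip y) ⊓ BilinForm.orthogonal ω ((R ⊔ ℂ ∙ v) ⊓ ker (ω.flip y)) = ⊥ by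
    obtain ⟨y, hvy, hH⟩ := this
    exact ⟨_, (isAmple_iff hω).2 <| .inr <| by rwa [range_add_smulRight_eq A (ω.flip y) hvy]⟩
  set S := R ⊔ ℂ ∙ v
  by_cases hnv : ω n v = 0
  · have hn_orth : n ∈ BilinForm.orthogonal ω S := by
      refine fun s hs => (sup_le (fun r hr => hn.2 r hr) ?_ : S ≤ ker (ω.flip n)) hs
      rw [span_singleton_le_iff_mem, mem_ker, flip_apply, hω.eq, hnv]
    obtain ⟨y, hny, hvy⟩ := exists_apply_ne_zero_and_apply_ne_zero (f := ω n) (g := ω v)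
      (fun h => hn0 (hnd n fun y => by simp [h])) (fun h => hv (hnd v fun y => by simp [h]))
    refine ⟨y, hvy, BilinForm.inf_ker_flip_inf_orthogonal_eq_bot hω (mem_sup_left hn.1) hny
      (fun h hh => hn_orth h hh.1) ?_⟩
    exact BilinForm.inf_orthogonal_le_span_singleton hω_nd hdim (mem_sup_left heR) hee
      ⟨mem_sup_left hn.1, hn_orth⟩ hn0
  · have hS := BilinForm.sup_span_singleton_inf_orthogonal_eq_bot hω hn
      (BilinForm.inf_orthogonal_le_span_singleton hω_nd hdim heR hee hn hn0) hnv
    obtain ⟨y, hyS, hvy, hyy⟩ := BilinForm.exists_mem_apply_ne_zero_and_apply_self_ne_zero hω hS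
      (mem_sup_right (mem_span_singleton_self v)) hv
    exact ⟨y, hvy,
      BilinForm.inf_ker_flip_inf_orthogonal_eq_bot hω hyS hyy inf_le_right (hS ▸ bot_le)⟩
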